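/- (Theorem 3.5, case d=1; beam-transform asymptotics of the scattered wave.) Let φ : ℝ → ℂ be a smooth compactly supported function and θ ∈ {−1, 1}. Then there exist C > 0 and κ₀ > 0 such that for all κ ≥ κ₀ the matrix A(κ) is invertible and, with k = κθ, |∫_ℝ e^{−ikx} ψ^{sc}(x, k) φ(x) dx − (2iκ)^{-1} Σ_{j=1}^n (−α_j^{-1}) ∫_0^∞ φ(y_j + tθ) dt| ≤ C κ^{−2}. -/

import Mathlib

open Complex Finset Matrix

noncomputable section

/-- The matrix `A(κ)` for a one-dimensional multipoint potential:
`A(κ)_{jj} = α_j + 1/(2iκ)`, `A(κ)_{jj'} = e^{iκ|y_j - y_{j'}|}/(2iκ)` for `j ≠ j'`. -/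
def A1 (n : ℕ) (y : Fin n → ℝ) (α : Fin n → ℂ) (κ : ℝ) : Matrix (Fin n) (Fin n) ℂ :=
  fun j j' => (if j = j' then α j else 0) +
    Complex.exp (Complex.I * κ * |y j - y j'|) / (2 * Complex.I * κ)

/-- `q(k) = A(κ)⁻¹ b(k)` with `b(k)_j = -e^{i k y_j}`. -/
def q1 (n : ℕ) (y : Fin n → ℝ) (α : Fin n → ℂ) (κ k : ℝ) : Fin n → ℂ :=
  (A1 n y α κ)⁻¹ *ᵥ fun j => -Complex.exp (Complex.I * k * y j)

/-- The scattering amplitude `f(k,ℓ) = (2π)⁻¹ Σ_j q_j(k) e^{-iℓ y_j}`. -/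
def f1 (n : ℕ) (y : Fin n → ℝ) (α : Fin n → ℂ) (κ k ℓ : ℝ) : ℂ :=
  (2 * Real.pi : ℂ)⁻¹ * ∑ j, q1 n y α κ k j * Complex.exp (-Complex.I * ℓ * y j)

/-- The matrix `W(κ)` with `W(κ)_{jj'} = (i/2) α_j⁻¹ e^{iκ|y_j - y_{j'}|}`. -/
def W1 (n : ℕ) (y : Fin n → ℝ) (α : Fin n → ℂ) (κ : ℝ) : Matrix (Fin n) (Fin n) ℂ :=
  fun j j' => Complex.I / 2 * (α j)⁻¹ * Complex.exp (Complex.I * κ * |y j - y j'|)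

/-- The coefficients `C_m(k,ℓ) = Σ_{j,j'} [W(κ)^m]_{jj'} α_{j'}⁻¹ e^{i(k y_{j'} - ℓ y_j)}`. -/
def C1coef (n : ℕ) (y : Fin n → ℝ) (α : Fin n → ℂ) (κ : ℝ) (m : ℕ) (k ℓ : ℝ) : ℂ :=
  ∑ j, ∑ j', (W1 n y α κ ^ m) j j' * (α j')⁻¹ *
    Complex.exp (Complex.I * (k * y j' - ℓ * y j))

section Auxiliary

open MeasureTheory


lemma normExpOne {z : ℂ} (hz : z.re = 0) : ‖Complex.exp z‖ = 1 := by
  rw [Complex.norm_exp, hz, Real.exp_zero]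

lemma shiftIoi (f : ℝ → ℂ) (c : ℝ) :
    ∫ t in Set.Ioi (0:ℝ), f (c + t) = ∫ x in Set.Ioi c, f x := by
  have h := (measurePreserving_add_left (volume : Measure ℝ) c).setIntegral_preimage_emb
    (measurableEmbedding_addLeft c) f (Set.Ioi c)
  rw [← h]
  congr 1
  ext t
  simp

lemma shiftIic (f : ℝ → ℂ) (c : ℝ) :
    ∫ t in Set.Iic (0:ℝ), f (c + t) = ∫ x in Set.Iic c, f x := by
  have h := (measurePreserving_add_left (volume : Measure ℝ) c).setIntegral_preimage_emb
    (measurableEmbedding_addLeft c) f (Set.Iic c)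
  rw [← h]
  congr 1
  ext t
  simp

lemma oscIic (φ : ℝ → ℂ) (hφ : ContDiff ℝ (⊤ : ℕ∞) φ) (hs : HasCompactSupport φ) (c : ℝ) :
    ∃ C, 0 ≤ C ∧ ∀ ω : ℝ, 1 ≤ |ω| →
      ‖∫ x in Set.Iic c, Complex.exp (Complex.I * ω * x) * φ x‖ ≤ C / |ω| := by
  obtain ⟨M, hM⟩ := (hs.deriv).exists_bound_of_continuous (hφ.continuous_deriv (by simp))
  have hM0 : 0 ≤ M := le_trans (norm_nonneg _) (hM 0)
  obtain ⟨R, hR⟩ := hs.isBounded.subset_closedBall 0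
  set a : ℝ := min c (-(|R| + 1)) with ha_def
  have hac : a ≤ c := min_le_left _ _
  have hφ0 : ∀ x ≤ a, φ x = 0 := by
    intro x hx
    apply image_eq_zero_of_notMem_tsupport
    intro hmem
    have := hR hmem
    rw [Metric.mem_closedBall, Real.dist_eq, sub_zero] at this
    have hxle : x ≤ -(|R| + 1) := le_trans hx (min_le_right _ _)
    have : |x| ≤ R := this
    have h1 : -(|R|+1) < x := lt_of_lt_of_le (by nlinarith [abs_nonneg R, neg_abs_le x, le_abs_self R]) le_rfl
    nlinarith [neg_abs_le x, le_abs_self R, abs_nonneg R]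
  refine ⟨‖φ c‖ + M * (c - a), add_nonneg (norm_nonneg _) (mul_nonneg hM0 (by linarith)), ?_⟩
  intro ω hω
  have hω0 : ω ≠ 0 := by intro h; rw [h] at hω; simp at hω; linarith
  have hIω : Complex.I * (ω:ℂ) ≠ 0 := by
    simp [Complex.I_ne_zero, hω0, Complex.ofReal_eq_zero]
  -- the integrand
  set g : ℝ → ℂ := fun x => Complex.exp (Complex.I * ω * x) * φ x with hg_def
  have hgcont : Continuous g := (Complex.continuous_exp.comp (by fun_prop)).mul hφ.continuous
  have hgsupp : HasCompactSupport g := hs.mul_left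
  have hgint : Integrable g := hgcont.integrable_of_hasCompactSupport hgsupp
  -- reduce to interval integral
  have hsplit : ∫ x in Set.Iic c, g x = ∫ x in a..c, g x := by
    rw [← Set.Iic_union_Ioc_eq_Iic hac,
      setIntegral_union (Set.Iic_disjoint_Ioc le_rfl) measurableSet_Ioc
        hgint.integrableOn hgint.integrableOn,
      setIntegral_eq_zero_of_forall_eq_zero (fun x hx => by
        simp only [hg_def]
        rw [hφ0 x hx.out, mul_zero]),
      zero_add, intervalIntegral.integral_of_le hac]
  -- integration by parts
  set v : ℝ → ℂ := fun x => Complex.exp (Complex.I * ω * x) / (Complex.I * ω) with hv_def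
  have hv : ∀ x : ℝ, HasDerivAt v (Complex.exp (Complex.I * ω * x)) x := by
    intro x
    have h1 : HasDerivAt (fun z : ℂ => Complex.exp (Complex.I * ω * z))
        (Complex.exp (Complex.I * ω * x) * (Complex.I * ω * 1)) (x : ℂ) :=
      ((hasDerivAt_id ((x:ℝ) : ℂ)).const_mul (Complex.I * (ω:ℂ))).cexp
    have h2 := h1.comp_ofReal
    have h3 := h2.div_const (Complex.I * ω)
    refine h3.congr_deriv ?_
    rw [mul_one, mul_div_assoc, div_self hIω, mul_one]
  have hu : ∀ x : ℝ, HasDerivAt φ (deriv φ x) x := fun x =>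
    ((hφ.differentiable (by simp)) x).hasDerivAt
  have hibp := intervalIntegral.integral_mul_deriv_eq_deriv_mul
    (u := φ) (u' := deriv φ) (v := v) (v' := fun x => Complex.exp (Complex.I * ω * x))
    (fun x _ => hu x) (fun x _ => hv x)
    ((hφ.continuous_deriv (by simp)).intervalIntegrable a c)
    ((Complex.continuous_exp.comp (by fun_prop)).intervalIntegrable a c)
  have hφa : φ a = 0 := hφ0 a le_rfl
  have hvnorm : ∀ x : ℝ, ‖v x‖ = 1 / |ω| := by
    intro x
    rw [hv_def]
    simp only [norm_div, norm_mul, Complex.norm_I, Complex.norm_real, Real.norm_eq_abs, one_mul]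
    rw [normExpOne (by simp)]
  have key : ∫ x in a..c, g x = φ c * v c - ∫ x in a..c, deriv φ x * v x := by
    have : ∀ x, g x = φ x * Complex.exp (Complex.I * ω * x) := fun x => mul_comm _ _
    simp_rw [this]
    rw [hibp, hφa, zero_mul, sub_zero]
  rw [hsplit, key]
  have h1 : ‖φ c * v c‖ ≤ ‖φ c‖ / |ω| := by
    rw [norm_mul, hvnorm c]
    ring_nf
    try rfl
  have h2 : ‖∫ x in a..c, deriv φ x * v x‖ ≤ M / |ω| * |c - a| := by
    apply intervalIntegral.norm_integral_le_of_norm_le_const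
    intro x _
    rw [norm_mul, hvnorm x]
    have := hM x
    calc ‖deriv φ x‖ * (1/|ω|) ≤ M * (1/|ω|) := by
          apply mul_le_mul_of_nonneg_right this (by positivity)
      _ = M / |ω| := by ring
  calc ‖φ c * v c - ∫ x in a..c, deriv φ x * v x‖
      ≤ ‖φ c * v c‖ + ‖∫ x in a..c, deriv φ x * v x‖ := norm_sub_le _ _
    _ ≤ ‖φ c‖ / |ω| + M / |ω| * |c - a| := add_le_add h1 h2
    _ = (‖φ c‖ + M * |c - a|) / |ω| := by ring
    _ = (‖φ c‖ + M * (c - a)) / |ω| := by rw [_root_.abs_of_nonneg (by linarith : (0:ℝ) ≤ c - a)]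

lemma oscIoi (φ : ℝ → ℂ) (hφ : ContDiff ℝ (⊤ : ℕ∞) φ) (hs : HasCompactSupport φ) (c : ℝ) :
    ∃ C, 0 ≤ C ∧ ∀ ω : ℝ, 1 ≤ |ω| →
      ‖∫ x in Set.Ioi c, Complex.exp (Complex.I * ω * x) * φ x‖ ≤ C / |ω| := by
  set ψ : ℝ → ℂ := fun x => φ (-x) with hψ_def
  have hψ : ContDiff ℝ (⊤ : ℕ∞) ψ := hφ.comp (contDiff_neg)
  have hψs : HasCompactSupport ψ := hs.comp_homeomorph (Homeomorph.neg ℝ)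
  obtain ⟨C, hC0, hC⟩ := oscIic ψ hψ hψs (-c)
  refine ⟨C, hC0, ?_⟩
  intro ω hω
  have h1 : ∫ x in Set.Ioi c, Complex.exp (Complex.I * ω * x) * φ x
      = ∫ x in Set.Iic (-c), Complex.exp (Complex.I * (-ω) * x) * ψ x := by
    rw [← integral_comp_neg_Ioi]
    apply setIntegral_congr_fun measurableSet_Ioi
    intro x _
    simp only [hψ_def, neg_neg]
    congr 1
    push_cast
    ring
  rw [h1]
  have h2 := hC (-ω) (by rwa [abs_neg])
  rw [abs_neg] at h2
  simpa using h2

lemma beamDecomp (φ : ℝ → ℂ) (hφ : ContDiff ℝ (⊤ : ℕ∞) φ) (hsupp : HasCompactSupport φ) (c : ℝ) :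
    ∃ C, 0 ≤ C ∧ ∀ θ : ℝ, (θ = 1 ∨ θ = -1) →
      (‖∫ t in Set.Ioi (0:ℝ), φ (c + t * θ)‖ ≤ ∫ x, ‖φ x‖) ∧
      ∀ κ : ℝ, 1 ≤ κ →
        ‖(∫ x : ℝ, Complex.exp (Complex.I * κ * |x - c| + -Complex.I * (κ * θ) * x) * φ x) -
          Complex.exp (-Complex.I * (κ * θ) * c) *
            ∫ t in Set.Ioi (0:ℝ), φ (c + t * θ)‖ ≤ C / κ := by
  obtain ⟨C₁, hC₁0, hC₁⟩ := oscIic φ hφ hsupp c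
  obtain ⟨C₂, hC₂0, hC₂⟩ := oscIoi φ hφ hsupp c
  have hφc : Continuous φ := hφ.continuous
  have hφint : Integrable φ := hφc.integrable_of_hasCompactSupport hsupp
  refine ⟨C₁ + C₂, by positivity, ?_⟩
  rintro θ (rfl | rfl)
  · -- θ = 1
    have hJ : ∫ t in Set.Ioi (0:ℝ), φ (c + t * 1) = ∫ x in Set.Ioi c, φ x := by
      simp only [mul_one]; exact shiftIoi φ c
    have hJb : ‖∫ x in Set.Ioi c, φ x‖ ≤ ∫ x, ‖φ x‖ :=
      (norm_integral_le_integral_norm _).trans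
        (setIntegral_le_integral hφint.norm (Filter.Eventually.of_forall fun x => norm_nonneg _))
    refine ⟨by rw [hJ]; exact hJb, ?_⟩
    intro κ hκ1
    have hκ0 : (0:ℝ) < κ := lt_of_lt_of_le one_pos hκ1
    set g : ℝ → ℂ := fun x =>
      Complex.exp (Complex.I * κ * |x - c| + -Complex.I * (κ * (1:ℝ)) * x) * φ x with hg_def
    have hgcont : Continuous g := (Complex.continuous_exp.comp (by fun_prop)).mul hφc
    have hgint : Integrable g :=
      hgcont.integrable_of_hasCompactSupport hsupp.mul_left
    have hconst : ∫ x in Set.Ioi c, g x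
        = Complex.exp (-Complex.I * ((κ:ℂ) * ((1:ℝ):ℂ)) * (c:ℂ)) * ∫ x in Set.Ioi c, φ x := by
      rw [← integral_const_mul]
      apply setIntegral_congr_fun measurableSet_Ioi
      intro x hx
      have habs : |x - c| = x - c := abs_of_pos (sub_pos.mpr hx)
      simp only [hg_def, habs]
      congr 1
      push_cast
      ring
    have hosc : ‖∫ x in Set.Iic c, g x‖ ≤ (C₁ + C₂) / κ := by
      have heq : ∫ x in Set.Iic c, g x
          = Complex.exp (Complex.I * ((κ*c : ℝ):ℂ)) *
            ∫ x in Set.Iic c, Complex.exp (Complex.I * ((-(2*κ) : ℝ):ℂ) * x) * φ x := by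
        rw [← integral_const_mul]
        apply setIntegral_congr_fun measurableSet_Iic
        intro x hx
        have habs : |x - c| = c - x := by
          rw [abs_of_nonpos (sub_nonpos.mpr hx), neg_sub]
        simp only [hg_def, habs, ← mul_assoc, ← Complex.exp_add]
        congr 2
        push_cast
        ring
      rw [heq, norm_mul, normExpOne (by simp), one_mul]
      have h2 := hC₁ (-(2*κ)) (by rw [abs_neg, abs_of_pos (by linarith)]; linarith)
      rw [abs_neg, abs_of_pos (by linarith : (0:ℝ) < 2*κ)] at h2
      calc ‖∫ x in Set.Iic c, Complex.exp (Complex.I * ((-(2*κ) : ℝ):ℂ) * x) * φ x‖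
          ≤ C₁ / (2*κ) := h2
        _ ≤ (C₁ + C₂) / κ := by
            rw [div_le_div_iff₀ (by linarith) hκ0]
            nlinarith
    rw [hJ, ← intervalIntegral.integral_Iic_add_Ioi hgint.integrableOn hgint.integrableOn, hconst,
      add_sub_cancel_right]
    exact hosc
  · -- θ = -1
    have hJ : ∫ t in Set.Ioi (0:ℝ), φ (c + t * (-1)) = ∫ x in Set.Iic c, φ x := by
      have h0 : ∀ t : ℝ, c + t * (-1) = c + -t := fun t => by ring
      simp_rw [h0]
      rw [integral_comp_neg_Ioi (0:ℝ) (fun u => φ (c + u)), neg_zero, shiftIic]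
    have hJb : ‖∫ x in Set.Iic c, φ x‖ ≤ ∫ x, ‖φ x‖ :=
      (norm_integral_le_integral_norm _).trans
        (setIntegral_le_integral hφint.norm (Filter.Eventually.of_forall fun x => norm_nonneg _))
    refine ⟨by rw [hJ]; exact hJb, ?_⟩
    intro κ hκ1
    have hκ0 : (0:ℝ) < κ := lt_of_lt_of_le one_pos hκ1
    set g : ℝ → ℂ := fun x =>
      Complex.exp (Complex.I * κ * |x - c| + -Complex.I * (κ * (-1:ℝ)) * x) * φ x with hg_def
    have hgcont : Continuous g := (Complex.continuous_exp.comp (by fun_prop)).mul hφc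
    have hgint : Integrable g :=
      hgcont.integrable_of_hasCompactSupport hsupp.mul_left
    have hconst : ∫ x in Set.Iic c, g x
        = Complex.exp (-Complex.I * ((κ:ℂ) * ((-1:ℝ):ℂ)) * (c:ℂ)) * ∫ x in Set.Iic c, φ x := by
      rw [← integral_const_mul]
      apply setIntegral_congr_fun measurableSet_Iic
      intro x hx
      have habs : |x - c| = c - x := by
        rw [abs_of_nonpos (sub_nonpos.mpr hx), neg_sub]
      simp only [hg_def, habs]
      congr 1
      push_cast
      ring
    have hosc : ‖∫ x in Set.Ioi c, g x‖ ≤ (C₁ + C₂) / κ := by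
      have heq : ∫ x in Set.Ioi c, g x
          = Complex.exp (Complex.I * ((-(κ*c) : ℝ):ℂ)) *
            ∫ x in Set.Ioi c, Complex.exp (Complex.I * ((2*κ : ℝ):ℂ) * x) * φ x := by
        rw [← integral_const_mul]
        apply setIntegral_congr_fun measurableSet_Ioi
        intro x hx
        have habs : |x - c| = x - c := abs_of_pos (sub_pos.mpr hx)
        simp only [hg_def, habs, ← mul_assoc, ← Complex.exp_add]
        congr 2
        push_cast
        ring
      rw [heq, norm_mul, normExpOne (by simp), one_mul]
      have h2 := hC₂ (2*κ) (by rw [abs_of_pos (by linarith)]; linarith)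
      rw [abs_of_pos (by linarith : (0:ℝ) < 2*κ)] at h2
      calc ‖∫ x in Set.Ioi c, Complex.exp (Complex.I * ((2*κ : ℝ):ℂ) * x) * φ x‖
          ≤ C₂ / (2*κ) := h2
        _ ≤ (C₁ + C₂) / κ := by
            rw [div_le_div_iff₀ (by linarith) hκ0]
            nlinarith
    rw [hJ, ← intervalIntegral.integral_Iic_add_Ioi hgint.integrableOn hgint.integrableOn, hconst,
      add_sub_cancel_left]
    exact hosc

end Auxiliary

open MeasureTheory

set_option maxHeartbeats 1000000 in
/-- Theorem 3.5, case d = 1: beam-transform asymptotics of the scattered wave. -/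
theorem stmt15 (n : ℕ) (y : Fin n → ℝ) (α : Fin n → ℂ)
    (hy : Function.Injective y) (hα : ∀ j, α j ≠ 0)
    (φ : ℝ → ℂ) (hφ : ContDiff ℝ (⊤ : ℕ∞) φ) (hsupp : HasCompactSupport φ)
    (θ : ℝ) (hθ : θ = 1 ∨ θ = -1) :
    ∃ C > (0 : ℝ), ∃ κ₀ > (0 : ℝ), ∀ κ ≥ κ₀, IsUnit (A1 n y α κ) ∧
      ‖(∫ x : ℝ, Complex.exp (-Complex.I * (κ * θ) * x) *
            (∑ j, q1 n y α κ (κ * θ) j *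
              Complex.exp (Complex.I * κ * |x - y j|) / (2 * Complex.I * κ)) * φ x) -
        (2 * Complex.I * κ)⁻¹ *
          ∑ j, (-(α j)⁻¹) * ∫ t in Set.Ioi (0 : ℝ), φ (y j + t * θ)‖ ≤ C / κ ^ 2 := by
  classical
  set a : ℝ := ∑ j, ‖(α j)⁻¹‖ with ha_def
  have ha0 : 0 ≤ a := Finset.sum_nonneg fun j _ => norm_nonneg _
  have hφc : Continuous φ := hφ.continuous
  have hφint : Integrable φ := hφc.integrable_of_hasCompactSupport hsupp
  set Φ : ℝ := ∫ x, ‖φ x‖ with hΦ_def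
  have hΦ0 : 0 ≤ Φ := integral_nonneg fun x => norm_nonneg _
  choose Cd hCd0 hCd using fun j : Fin n => beamDecomp φ hφ hsupp (y j)
  have hCdsum0 : 0 ≤ ∑ j, Cd j := Finset.sum_nonneg fun j _ => hCd0 j
  refine ⟨a ^ 2 * Φ / 2 + a * (∑ j, Cd j) + 1, by positivity, a + 1, by linarith, ?_⟩
  intro κ hκ
  have hκ1 : (1:ℝ) ≤ κ := by linarith
  have hκ0 : (0:ℝ) < κ := by linarith
  have hκa : a ≤ κ := by linarith
  have hκne : κ ≠ 0 := ne_of_gt hκ0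
  have hnorm2iκ : ‖((2 * Complex.I * (κ:ℂ)))⁻¹‖ = (2*κ)⁻¹ := by
    have h2 : (2 * Complex.I * (κ:ℂ)) = ((2*κ : ℝ):ℂ) * Complex.I := by push_cast; ring
    rw [norm_inv, h2, norm_mul, Complex.norm_I, mul_one, Complex.norm_real, Real.norm_eq_abs,
      _root_.abs_of_pos (by linarith : (0:ℝ) < 2*κ)]
  have hEnorm : ∀ j j' : Fin n, ‖Complex.exp (Complex.I * κ * |y j - y j'|)‖ = 1 :=
    fun j j' => normExpOne (by simp)
  have hEsum : ∀ (v : Fin n → ℂ) (j : Fin n),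
      ‖∑ j', Complex.exp (Complex.I * κ * |y j - y j'|) * v j'‖ ≤ ∑ j', ‖v j'‖ := by
    intro v j
    refine (norm_sum_le _ _).trans (le_of_eq (Finset.sum_congr rfl fun j' _ => ?_))
    rw [norm_mul, hEnorm, one_mul]
  have hrow : ∀ (v : Fin n → ℂ) (j : Fin n), (A1 n y α κ *ᵥ v) j
      = α j * v j + (2 * Complex.I * κ)⁻¹ *
          ∑ j', Complex.exp (Complex.I * κ * |y j - y j'|) * v j' := by
    intro v j
    simp only [A1, Matrix.mulVec, dotProduct]
    simp only [add_mul]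
    rw [Finset.sum_add_distrib]
    congr 1
    · simp [ite_mul, Finset.sum_ite_eq]
    · rw [Finset.mul_sum]
      exact Finset.sum_congr rfl fun j' _ => by ring
  -- invertibility
  have hdet : (A1 n y α κ).det ≠ 0 := by
    intro h0
    obtain ⟨v, hv0, hv⟩ := (Matrix.exists_mulVec_eq_zero_iff).mpr h0
    set S : ℝ := ∑ j, ‖v j‖ with hS_def
    have hS0 : 0 ≤ S := Finset.sum_nonneg fun j _ => norm_nonneg _
    have hjle : ∀ j, ‖v j‖ ≤ ‖(α j)⁻¹‖ * ((2*κ)⁻¹ * S) := by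
      intro j
      have h1 := hrow v j
      rw [hv, Pi.zero_apply] at h1
      have h2 : α j * v j = -((2*Complex.I*(κ:ℂ))⁻¹ *
          ∑ j', Complex.exp (Complex.I * κ * |y j - y j'|) * v j') := by
        linear_combination -h1
      calc ‖v j‖ = ‖(α j)⁻¹ * (α j * v j)‖ := by
            rw [inv_mul_cancel_left₀ (hα j)]
        _ = ‖(α j)⁻¹‖ * ‖α j * v j‖ := norm_mul _ _
        _ ≤ ‖(α j)⁻¹‖ * ((2*κ)⁻¹ * S) := by
            refine mul_le_mul_of_nonneg_left ?_ (norm_nonneg _)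
            rw [h2, norm_neg, norm_mul, hnorm2iκ]
            exact mul_le_mul_of_nonneg_left (hEsum v j) (inv_nonneg.mpr (by linarith))
    have hSle : S ≤ a * ((2*κ)⁻¹ * S) := by
      calc S = ∑ j, ‖v j‖ := rfl
        _ ≤ ∑ j, ‖(α j)⁻¹‖ * ((2*κ)⁻¹ * S) := Finset.sum_le_sum fun j _ => hjle j
        _ = a * ((2*κ)⁻¹ * S) := by rw [← Finset.sum_mul]
    have hhalf : a * ((2*κ)⁻¹ * S) ≤ S / 2 := by
      have h4 : a * ((2*κ)⁻¹ * S) = a * S / (2*κ) := by ring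
      rw [h4, div_le_div_iff₀ (by linarith) (by norm_num : (0:ℝ) < 2)]
      nlinarith
    have hS00 : S = 0 := le_antisymm (by linarith) hS0
    apply hv0
    funext j
    have h5 : ‖v j‖ ≤ S :=
      Finset.single_le_sum (f := fun j => ‖v j‖) (fun i _ => norm_nonneg _) (Finset.mem_univ j)
    have : ‖v j‖ = 0 := le_antisymm (by linarith) (norm_nonneg _)
    simpa using this
  have hU : IsUnit (A1 n y α κ) := (Matrix.isUnit_iff_isUnit_det _).mpr (isUnit_iff_ne_zero.mpr hdet)
  refine ⟨hU, ?_⟩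
  -- the vector q and its properties
  set q : Fin n → ℂ := q1 n y α κ (κ*θ) with hq_def
  have hAq : A1 n y α κ *ᵥ q = fun j => -Complex.exp (Complex.I * ((κ*θ : ℝ):ℂ) * (y j:ℂ)) := by
    have hq1 : q = (A1 n y α κ)⁻¹ *ᵥ
        (fun j => -Complex.exp (Complex.I * ((κ*θ : ℝ):ℂ) * ((y j : ℝ):ℂ))) := rfl
    rw [hq1, Matrix.mulVec_mulVec,
      Matrix.mul_nonsing_inv _ (isUnit_iff_ne_zero.mpr hdet), Matrix.one_mulVec]
  have hrowq : ∀ j, α j * q j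
      = -Complex.exp (Complex.I * ((κ*θ : ℝ):ℂ) * (y j:ℂ)) - (2*Complex.I*(κ:ℂ))⁻¹ *
          ∑ j', Complex.exp (Complex.I * κ * |y j - y j'|) * q j' := by
    intro j
    have h1 : α j * q j + (2*Complex.I*(κ:ℂ))⁻¹ *
        ∑ j', Complex.exp (Complex.I * κ * |y j - y j'|) * q j'
        = -Complex.exp (Complex.I * ((κ*θ : ℝ):ℂ) * (y j:ℂ)) :=
      (hrow q j).symm.trans (congrFun hAq j)
    linear_combination h1
  set Sq : ℝ := ∑ j, ‖q j‖ with hSq_def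
  have hSq0 : 0 ≤ Sq := Finset.sum_nonneg fun j _ => norm_nonneg _
  have hq_each : ∀ j, ‖q j‖ ≤ ‖(α j)⁻¹‖ * (1 + (2*κ)⁻¹ * Sq) := by
    intro j
    calc ‖q j‖ = ‖(α j)⁻¹ * (α j * q j)‖ := by
          rw [inv_mul_cancel_left₀ (hα j)]
      _ = ‖(α j)⁻¹‖ * ‖α j * q j‖ := norm_mul _ _
      _ ≤ ‖(α j)⁻¹‖ * (1 + (2*κ)⁻¹ * Sq) := by
          refine mul_le_mul_of_nonneg_left ?_ (norm_nonneg _)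
          rw [hrowq j]
          refine (norm_sub_le _ _).trans ?_
          rw [norm_neg, normExpOne (by simp), norm_mul, hnorm2iκ]
          exact add_le_add_right (mul_le_mul_of_nonneg_left (hEsum q j) (inv_nonneg.mpr (by linarith))) 1
  have hSqle : Sq ≤ 2 * a := by
    have h1 : Sq ≤ a * (1 + (2*κ)⁻¹ * Sq) := by
      calc Sq = ∑ j, ‖q j‖ := rfl
        _ ≤ ∑ j, ‖(α j)⁻¹‖ * (1 + (2*κ)⁻¹ * Sq) := Finset.sum_le_sum fun j _ => hq_each j
        _ = a * (1 + (2*κ)⁻¹ * Sq) := by rw [← Finset.sum_mul]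
    have h2 : a * ((2*κ)⁻¹ * Sq) ≤ Sq / 2 := by
      have h4 : a * ((2*κ)⁻¹ * Sq) = a * Sq / (2*κ) := by ring
      rw [h4, div_le_div_iff₀ (by linarith) (by norm_num : (0:ℝ) < 2)]
      nlinarith
    nlinarith
  have hE2norm : ∀ j : Fin n, ‖Complex.exp (-Complex.I * (κ * θ) * y j)‖ = 1 := fun j => normExpOne (by simp)
  have hδ : ∀ j : Fin n, ‖q j * Complex.exp (-Complex.I * (κ * θ) * y j) + (α j)⁻¹‖ ≤ ‖(α j)⁻¹‖ * ((2*κ)⁻¹ * Sq) := by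
    intro j
    have hαinv : α j * (α j)⁻¹ = 1 := mul_inv_cancel₀ (hα j)
    have hb : Complex.exp (Complex.I * ((κ*θ : ℝ):ℂ) * (y j:ℂ)) * Complex.exp (-Complex.I * (κ * θ) * y j) = 1 := by
      rw [← Complex.exp_add, ← Complex.exp_zero]
      congr 1
      push_cast
      ring
    have h2 : α j * (q j * Complex.exp (-Complex.I * (κ * θ) * y j) + (α j)⁻¹)
        = -((2*Complex.I*(κ:ℂ))⁻¹ *
            (∑ j', Complex.exp (Complex.I * κ * |y j - y j'|) * q j') * Complex.exp (-Complex.I * (κ * θ) * y j)) := by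
      linear_combination Complex.exp (-Complex.I * (κ * θ) * y j) * (hrowq j) + hαinv - hb
    calc ‖q j * Complex.exp (-Complex.I * (κ * θ) * y j) + (α j)⁻¹‖
          = ‖(α j)⁻¹ * (α j * (q j * Complex.exp (-Complex.I * (κ * θ) * y j) + (α j)⁻¹))‖ := by
          rw [inv_mul_cancel_left₀ (hα j)]
      _ = ‖(α j)⁻¹‖ * ‖α j * (q j * Complex.exp (-Complex.I * (κ * θ) * y j) + (α j)⁻¹)‖ := norm_mul _ _
      _ ≤ ‖(α j)⁻¹‖ * ((2*κ)⁻¹ * Sq) := by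
          refine mul_le_mul_of_nonneg_left ?_ (norm_nonneg _)
          rw [h2, norm_neg, norm_mul, norm_mul, hnorm2iκ, hE2norm j, mul_one]
          exact mul_le_mul_of_nonneg_left (hEsum q j) (inv_nonneg.mpr (by linarith))
  -- rewrite the integral as a finite sum
  have hgint : ∀ j : Fin n, Integrable
      (fun x : ℝ => Complex.exp (Complex.I * κ * |x - y j| + -Complex.I * (κ * θ) * x) * φ x) := by
    intro j
    exact ((Complex.continuous_exp.comp (by fun_prop)).mul hφc).integrable_of_hasCompactSupport
      hsupp.mul_left
  have hsum_int : (∫ x : ℝ, Complex.exp (-Complex.I * (κ * θ) * x) *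
        (∑ j, q j * Complex.exp (Complex.I * κ * |x - y j|) / (2 * Complex.I * κ))
          * φ x)
      = ∑ j, (2 * Complex.I * (κ:ℂ))⁻¹ * q j * (∫ x : ℝ, Complex.exp (Complex.I * κ * |x - y j| + -Complex.I * (κ * θ) * x) * φ x) := by
    have hpt : ∀ x : ℝ, Complex.exp (-Complex.I * (κ * θ) * x) *
        (∑ j, q j * Complex.exp (Complex.I * κ * |x - y j|) / (2 * Complex.I * κ))
          * φ x
        = ∑ j, (2 * Complex.I * (κ:ℂ))⁻¹ * q j *
            (Complex.exp (Complex.I * κ * |x - y j| + -Complex.I * (κ * θ) * x) * φ x) := by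
      intro x
      rw [Finset.mul_sum, Finset.sum_mul]
      refine Finset.sum_congr rfl fun j _ => ?_
      simp only [Complex.exp_add]
      ring
    calc (∫ x : ℝ, Complex.exp (-Complex.I * (κ * θ) * x) *
        (∑ j, q j * Complex.exp (Complex.I * κ * |x - y j|) / (2 * Complex.I * κ))
          * φ x)
        = ∫ x : ℝ, ∑ j, (2 * Complex.I * (κ:ℂ))⁻¹ * q j *
            (Complex.exp (Complex.I * κ * |x - y j| + -Complex.I * (κ * θ) * x) * φ x) := by
          congr 1; funext x; exact hpt x
      _ = ∑ j, ∫ x : ℝ, (2 * Complex.I * (κ:ℂ))⁻¹ * q j *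
            (Complex.exp (Complex.I * κ * |x - y j| + -Complex.I * (κ * θ) * x) * φ x) :=
          integral_finset_sum _ (fun j _ => (hgint j).const_mul _)
      _ = ∑ j, (2 * Complex.I * (κ:ℂ))⁻¹ * q j * (∫ x : ℝ, Complex.exp (Complex.I * κ * |x - y j| + -Complex.I * (κ * θ) * x) * φ x) := by
          refine Finset.sum_congr rfl fun j _ => ?_
          exact integral_const_mul _ _
  -- the beam data
  have hJb : ∀ j : Fin n, ‖(∫ t in Set.Ioi (0:ℝ), φ (y j + t * θ))‖ ≤ Φ := fun j => (hCd j θ hθ).1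
  have hGle : ∀ j : Fin n, ‖(∫ x : ℝ, Complex.exp (Complex.I * κ * |x - y j| + -Complex.I * (κ * θ) * x) * φ x) - Complex.exp (-Complex.I * (κ * θ) * y j) * (∫ t in Set.Ioi (0:ℝ), φ (y j + t * θ))‖ ≤ Cd j / κ := by
    intro j
    exact ((hCd j θ hθ).2) κ hκ1
  -- assemble
  rw [hsum_int]
  have hdiff : (∑ j, (2 * Complex.I * (κ:ℂ))⁻¹ * q j * (∫ x : ℝ, Complex.exp (Complex.I * κ * |x - y j| + -Complex.I * (κ * θ) * x) * φ x)) -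
      (2 * Complex.I * (κ:ℂ))⁻¹ * ∑ j, (-(α j)⁻¹) * (∫ t in Set.Ioi (0:ℝ), φ (y j + t * θ))
      = (2 * Complex.I * (κ:ℂ))⁻¹ *
          ∑ j, (q j * ((∫ x : ℝ, Complex.exp (Complex.I * κ * |x - y j| + -Complex.I * (κ * θ) * x) * φ x) - Complex.exp (-Complex.I * (κ * θ) * y j) * (∫ t in Set.Ioi (0:ℝ), φ (y j + t * θ))) + (q j * Complex.exp (-Complex.I * (κ * θ) * y j) + (α j)⁻¹) * (∫ t in Set.Ioi (0:ℝ), φ (y j + t * θ))) := by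
    rw [Finset.mul_sum, Finset.mul_sum, ← Finset.sum_sub_distrib]
    refine Finset.sum_congr rfl fun j _ => ?_
    ring
  rw [hdiff, norm_mul, hnorm2iκ]
  have hterm : ∀ j ∈ Finset.univ (α := Fin n),
      ‖q j * ((∫ x : ℝ, Complex.exp (Complex.I * κ * |x - y j| + -Complex.I * (κ * θ) * x) * φ x) - Complex.exp (-Complex.I * (κ * θ) * y j) * (∫ t in Set.Ioi (0:ℝ), φ (y j + t * θ))) + (q j * Complex.exp (-Complex.I * (κ * θ) * y j) + (α j)⁻¹) * (∫ t in Set.Ioi (0:ℝ), φ (y j + t * θ))‖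
        ≤ 2*a * (Cd j / κ) + ‖(α j)⁻¹‖ * ((2*κ)⁻¹ * (2*a)) * Φ := by
    intro j _
    have hqj : ‖q j‖ ≤ 2*a := le_trans
      (Finset.single_le_sum (f := fun j => ‖q j‖) (fun i _ => norm_nonneg _) (Finset.mem_univ j))
      hSqle
    have hδj : ‖q j * Complex.exp (-Complex.I * (κ * θ) * y j) + (α j)⁻¹‖ ≤ ‖(α j)⁻¹‖ * ((2*κ)⁻¹ * (2*a)) :=
      (hδ j).trans (by
        refine mul_le_mul_of_nonneg_left ?_ (norm_nonneg _)
        exact mul_le_mul_of_nonneg_left hSqle (inv_nonneg.mpr (by linarith)))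
    calc ‖q j * ((∫ x : ℝ, Complex.exp (Complex.I * κ * |x - y j| + -Complex.I * (κ * θ) * x) * φ x) - Complex.exp (-Complex.I * (κ * θ) * y j) * (∫ t in Set.Ioi (0:ℝ), φ (y j + t * θ))) + (q j * Complex.exp (-Complex.I * (κ * θ) * y j) + (α j)⁻¹) * (∫ t in Set.Ioi (0:ℝ), φ (y j + t * θ))‖
        ≤ ‖q j‖ * ‖(∫ x : ℝ, Complex.exp (Complex.I * κ * |x - y j| + -Complex.I * (κ * θ) * x) * φ x) - Complex.exp (-Complex.I * (κ * θ) * y j) * (∫ t in Set.Ioi (0:ℝ), φ (y j + t * θ))‖ + ‖q j * Complex.exp (-Complex.I * (κ * θ) * y j) + (α j)⁻¹‖ * ‖(∫ t in Set.Ioi (0:ℝ), φ (y j + t * θ))‖ := by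
          refine (norm_add_le _ _).trans ?_
          rw [norm_mul, norm_mul]
      _ ≤ 2*a * (Cd j / κ) + ‖(α j)⁻¹‖ * ((2*κ)⁻¹ * (2*a)) * Φ := by
          refine add_le_add ?_ ?_
          · exact mul_le_mul hqj (hGle j) (norm_nonneg _) (by linarith : (0:ℝ) ≤ 2*a)
          · exact mul_le_mul hδj (hJb j) (norm_nonneg _)
              (mul_nonneg (norm_nonneg _) (mul_nonneg (inv_nonneg.mpr (by linarith)) (by linarith)))
  have hsum_norm : ‖∑ j, (q j * ((∫ x : ℝ, Complex.exp (Complex.I * κ * |x - y j| + -Complex.I * (κ * θ) * x) * φ x) - Complex.exp (-Complex.I * (κ * θ) * y j) * (∫ t in Set.Ioi (0:ℝ), φ (y j + t * θ))) + (q j * Complex.exp (-Complex.I * (κ * θ) * y j) + (α j)⁻¹) * (∫ t in Set.Ioi (0:ℝ), φ (y j + t * θ)))‖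
      ≤ 2*a * ((∑ j, Cd j) / κ) + a * ((2*κ)⁻¹ * (2*a)) * Φ := by
    refine (norm_sum_le _ _).trans ((Finset.sum_le_sum hterm).trans (le_of_eq ?_))
    rw [Finset.sum_add_distrib, ← Finset.mul_sum, ← Finset.sum_div, ← Finset.sum_mul,
      ← Finset.sum_mul]
  calc (2*κ)⁻¹ * ‖∑ j, (q j * ((∫ x : ℝ, Complex.exp (Complex.I * κ * |x - y j| + -Complex.I * (κ * θ) * x) * φ x) - Complex.exp (-Complex.I * (κ * θ) * y j) * (∫ t in Set.Ioi (0:ℝ), φ (y j + t * θ))) + (q j * Complex.exp (-Complex.I * (κ * θ) * y j) + (α j)⁻¹) * (∫ t in Set.Ioi (0:ℝ), φ (y j + t * θ)))‖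
      ≤ (2*κ)⁻¹ * (2*a * ((∑ j, Cd j) / κ) + a * ((2*κ)⁻¹ * (2*a)) * Φ) :=
        mul_le_mul_of_nonneg_left hsum_norm (inv_nonneg.mpr (by linarith))
    _ = (a * (∑ j, Cd j) + a^2 * Φ / 2) / κ^2 := by field_simp
    _ ≤ (a ^ 2 * Φ / 2 + a * (∑ j, Cd j) + 1) / κ^2 := by
        rw [div_le_div_iff₀ (pow_pos hκ0 2) (pow_pos hκ0 2)]
        nlinarith [pow_pos hκ0 2]
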